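/- Let E_1,...,E_n,E_{n+1} be exchangeable real-valued random variables and let Q̂ be the ⌈(1−α)(n+1)⌉-th smallest value among E_1,...,E_n (with Q̂ = +∞ if ⌈(1−α)(n+1)⌉ > n). Then P[E_{n+1} ≤ Q̂] ≥ 1 − α. -/

import Mathlib

open MeasureTheory

/-- The `k`-th smallest value of a multiset of reals (1-indexed),
defined as `⊤` when `k` exceeds the number of elements. -/
noncomputable def kthSmallest (s : Multiset ℝ) (k : ℕ) : EReal :=
  if h : k - 1 < Multiset.card s then
    (((s.sort (· ≤ ·)).get ⟨k - 1, by simpa using h⟩ : ℝ) : EReal)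
  else ⊤

/-!
Coverage fails exactly when at least `k = ⌈(1 - α)(n + 1)⌉` of `E₁, …, Eₙ` lie strictly below
`Eₙ₊₁`, i.e. when the strict rank of `Eₙ₊₁` among all `n + 1` scores is at least `k`. For any
`n + 1` numbers at most `n + 1 - k` of them have strict rank `≥ k`: the smallest one among them
already has `k` values strictly below it, none of which can qualify. By exchangeability every index
has strict rank `≥ k` with the same probability `p`, so `(n + 1) p ≤ n + 1 - k ≤ (n + 1) α`.
-/

open Finset
open scoped ENNReal

theorem Monotone.lt_iff_lt_card_filter_lt {α : Type*} [LinearOrder α] {m : ℕ} {g : Fin m → α}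
    (hg : Monotone g) (i : Fin m) (x : α) :
    g i < x ↔ (i : ℕ) < #{j | g j < x} := by
  constructor
  · intro hi
    have hsub : Iic i ⊆ ({j | g j < x} : Finset _) := fun j hj =>
      mem_filter.2 ⟨mem_univ j, (hg (mem_Iic.1 hj)).trans_lt hi⟩
    simpa [Fin.card_Iic] using card_le_card hsub
  · intro hi
    by_contra hx
    have hsub : ({j | g j < x} : Finset _) ⊆ Iio i := fun j hj => by
      rw [mem_filter] at hj
      exact mem_Iio.2 (lt_of_not_ge fun hij => hx ((hg hij).trans_lt hj.2))
    simpa [Fin.card_Iio] using (card_le_card hsub).trans_lt' hi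

theorem Multiset.card_filter_map_univ {ι α : Type*} [Fintype ι] (f : ι → α) (p : α → Prop)
    [DecidablePred p] :
    card ((univ.val.map f).filter p) = #{i | p (f i)} := by
  rw [Multiset.filter_map, Multiset.card_map]
  rfl

theorem le_kthSmallest_iff (s : Multiset ℝ) {k : ℕ} (hk : 1 ≤ k) (x : ℝ) :
    (x : EReal) ≤ kthSmallest s k ↔ Multiset.card (s.filter (· < x)) < k := by
  unfold kthSmallest
  split_ifs with h
  · have hcount :
        Multiset.card (s.filter (· < x)) = #{j | (s.sort (· ≤ ·)).get j < x} := by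
      conv_lhs => rw [← Multiset.sort_eq s (· ≤ ·), ← List.ofFn_get (s.sort (· ≤ ·)),
        ← Fin.univ_val_map]
      exact Multiset.card_filter_map_univ _ _
    rw [EReal.coe_le_coe_iff, ← not_lt,
      (Multiset.pairwise_sort s _).sortedLE.monotone_get.lt_iff_lt_card_filter_lt, hcount]
    dsimp only
    omega
  · simp only [le_top, true_iff]
    exact (Multiset.card_le_card (Multiset.filter_le _ s)).trans_lt (by omega)

section StrictRank

variable {ι α : Type*} [Fintype ι] [LinearOrder α]

def strictRank (f : ι → α) (j : ι) : ℕ := #{i | f i < f j}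

theorem strictRank_comp_perm (f : ι → α) (σ : Equiv.Perm ι) (j : ι) :
    strictRank (f ∘ σ) j = strictRank f (σ j) := by
  simp only [strictRank, card_filter, Function.comp_apply]
  exact Equiv.sum_comp σ (fun i => if f i < f (σ j) then 1 else 0)

theorem card_filter_le_strictRank_le (f : ι → α) (k : ℕ) :
    #{j | k ≤ strictRank f j} ≤ Fintype.card ι - k := by
  set S : Finset ι := {j | k ≤ strictRank f j}
  rcases S.eq_empty_or_nonempty with hS | hS
  · simp [hS]
  obtain ⟨j₀, hj₀, hmin⟩ := S.exists_min_image f hS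
  have hdisj : Disjoint S ({i | f i < f j₀} : Finset ι) := by
    refine disjoint_left.2 fun i hiS hi => ?_
    exact (hmin i hiS).not_gt (mem_filter.1 hi).2
  have hk : k ≤ #{i | f i < f j₀} := (mem_filter.1 hj₀).2
  have hunion := card_disjUnion _ _ hdisj ▸ card_le_univ (S.disjUnion _ hdisj)
  omega

omit [Fintype ι] in
theorem strictRank_last {n : ℕ} (f : Fin (n + 1) → α) :
    strictRank f (Fin.last n) = #{i : Fin n | f i.castSucc < f (Fin.last n)} := by
  simp only [strictRank, card_filter, Fin.sum_univ_castSucc, lt_irrefl, if_false, add_zero]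

theorem measurable_strictRank [TopologicalSpace α] [MeasurableSpace α] [OpensMeasurableSpace α]
    [OrderClosedTopology α] [SecondCountableTopology α] (j : ι) :
    Measurable fun f : ι → α => strictRank f j := by
  simp only [strictRank, card_filter]
  exact Finset.measurable_sum _ fun i _ =>
    Measurable.ite (measurableSet_lt (measurable_pi_apply i) (measurable_pi_apply j))
      measurable_const measurable_const

end StrictRank

section Exchangeable

variable {ι Ω β : Type*} [MeasurableSpace Ω] [MeasurableSpace β]

def Exchangeable (μ : Measure Ω) (X : ι → Ω → β) : Prop :=
  ∀ σ : Equiv.Perm ι, μ.map (fun ω i => X (σ i) ω) = μ.map (fun ω i => X i ω)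

theorem Exchangeable.measure_preimage_comp_perm {μ : Measure Ω} {X : ι → Ω → β}
    (hX : Exchangeable μ X) (hmeas : ∀ i, Measurable (X i)) (σ : Equiv.Perm ι)
    {B : Set (ι → β)} (hB : MeasurableSet B) :
    μ ((fun ω i => X (σ i) ω) ⁻¹' B) = μ ((fun ω i => X i ω) ⁻¹' B) := by
  rw [← Measure.map_apply (by fun_prop) hB, ← Measure.map_apply (by fun_prop) hB, hX σ]

theorem sum_measure_le_of_forall_card_le [Fintype ι] (μ : Measure Ω) {A : ι → Set Ω}
    (hA : ∀ j, MeasurableSet (A j)) [∀ ω, DecidablePred (ω ∈ A ·)] {m : ℕ}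
    (hm : ∀ ω, #{j | ω ∈ A j} ≤ m) :
    ∑ j, μ (A j) ≤ m * μ Set.univ := by
  have hcard (ω : Ω) : ∑ j, (A j).indicator 1 ω = (#{j | ω ∈ A j} : ℝ≥0∞) := by
    rw [card_filter]
    push_cast
    simp only [Set.indicator_apply, Pi.one_apply]
  calc ∑ j, μ (A j) = ∫⁻ ω, ∑ j, (A j).indicator 1 ω ∂μ := by
        rw [lintegral_finsetSum _ fun j _ => measurable_one.indicator (hA j)]
        simp only [lintegral_indicator_one (hA _)]
    _ ≤ ∫⁻ _, (m : ℝ≥0∞) ∂μ :=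
        lintegral_mono fun ω => by rw [hcard]; exact Nat.cast_le.2 (hm ω)
    _ = m * μ Set.univ := lintegral_const _

theorem measurableSet_le_strictRank [Fintype ι] [LinearOrder β] [TopologicalSpace β]
    [OpensMeasurableSpace β] [OrderClosedTopology β] [SecondCountableTopology β]
    {X : ι → Ω → β} (hmeas : ∀ i, Measurable (X i)) (k : ℕ) (j : ι) :
    MeasurableSet {ω | k ≤ strictRank (X · ω) j} :=
  (measurable_strictRank j).comp (measurable_pi_lambda _ hmeas) measurableSet_Ici

theorem Exchangeable.card_mul_measure_le_strictRank_le [Fintype ι] [LinearOrder β]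
    [TopologicalSpace β] [OpensMeasurableSpace β] [OrderClosedTopology β]
    [SecondCountableTopology β] {μ : Measure Ω} {X : ι → Ω → β} (hX : Exchangeable μ X)
    (hmeas : ∀ i, Measurable (X i)) (j : ι) (k : ℕ) :
    Fintype.card ι * μ {ω | k ≤ strictRank (X · ω) j}
      ≤ (Fintype.card ι - k : ℕ) * μ Set.univ := by
  classical
  have hAj (i : ι) : μ {ω | k ≤ strictRank (X · ω) i} = μ {ω | k ≤ strictRank (X · ω) j} := by
    convert hX.measure_preimage_comp_perm hmeas (Equiv.swap i j)
      (measurable_strictRank j (measurableSet_Ici (a := k))) using 2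
    · ext ω
      change k ≤ strictRank (X · ω) i ↔ k ≤ strictRank ((X · ω) ∘ Equiv.swap i j) j
      rw [strictRank_comp_perm, Equiv.swap_apply_right]
    · rfl
  calc Fintype.card ι * μ {ω | k ≤ strictRank (X · ω) j}
      = ∑ i, μ {ω | k ≤ strictRank (X · ω) i} := by simp [hAj]
    _ ≤ (Fintype.card ι - k : ℕ) * μ Set.univ :=
      sum_measure_le_of_forall_card_le μ (measurableSet_le_strictRank hmeas k) fun ω =>
        card_filter_le_strictRank_le (X · ω) k

end Exchangeable

theorem stmt_5_general {Ω : Type*} [MeasurableSpace Ω] (μ : Measure Ω) [IsProbabilityMeasure μ]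
    (n : ℕ) (α : ℝ) (hα : α ∈ Set.Ioo (0:ℝ) 1)
    (E : Fin (n + 1) → Ω → ℝ)
    (hmeas : ∀ i, Measurable (E i))
    (hexch : ∀ π : Equiv.Perm (Fin (n + 1)),
      Measure.map (fun ω => fun i => E (π i) ω) μ
        = Measure.map (fun ω => fun i => E i ω) μ) :
    ENNReal.ofReal (1 - α) ≤
      μ {ω | (E (Fin.last n) ω : EReal) ≤
        kthSmallest (Multiset.map (fun i : Fin n => E i.castSucc ω) Finset.univ.val)
          ⌈(1 - α) * ((n : ℝ) + 1)⌉₊} := by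
  obtain ⟨hα0, hα1⟩ := hα
  set k := ⌈(1 - α) * ((n : ℝ) + 1)⌉₊
  have hk : (1 - α) * ((n : ℝ) + 1) ≤ k := Nat.le_ceil _
  have hk1 : 1 ≤ k := Nat.ceil_pos.2 (by positivity)
  have hkn : k ≤ n + 1 := Nat.ceil_le.2 (by push_cast; nlinarith)
  set A := {ω | k ≤ strictRank (E · ω) (Fin.last n)}
  have hevent : {ω | (E (Fin.last n) ω : EReal) ≤
      kthSmallest (Multiset.map (fun i : Fin n => E i.castSucc ω) Finset.univ.val) k} = Aᶜ := by
    ext ω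
    rw [Set.mem_ofPred_eq, le_kthSmallest_iff _ hk1, Multiset.card_filter_map_univ,
      Set.mem_compl_iff, Set.mem_ofPred_eq, strictRank_last, not_le]
  have hrank : ((n : ℝ) + 1) * μ.real A ≤ n + 1 - k := by
    have hcount :=
      Exchangeable.card_mul_measure_le_strictRank_le (μ := μ) hexch hmeas (Fin.last n) k
    rw [Fintype.card_fin, measure_univ, mul_one] at hcount
    have hreal := ENNReal.toReal_mono (by simp) hcount
    rwa [ENNReal.toReal_mul, ENNReal.toReal_natCast, ENNReal.toReal_natCast, Nat.cast_sub hkn,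
      ← measureReal_def, Nat.cast_add_one] at hreal
  have hA : μ.real A ≤ α := by nlinarith
  rw [hevent, ← ofReal_measureReal,
    probReal_compl_eq_one_sub (measurableSet_le_strictRank hmeas k _)]
  exact ENNReal.ofReal_le_ofReal (by linarith)

theorem stmt_5 {Ω : Type*} [MeasurableSpace Ω] (μ : Measure Ω) [IsProbabilityMeasure μ]
    (n : ℕ) (hn : 1 ≤ n) (α : ℝ) (hα : α ∈ Set.Ioo (0:ℝ) 1)
    (E : Fin (n + 1) → Ω → ℝ)
    (hmeas : ∀ i, Measurable (E i))
    (hexch : ∀ π : Equiv.Perm (Fin (n + 1)),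
      Measure.map (fun ω => fun i => E (π i) ω) μ
        = Measure.map (fun ω => fun i => E i ω) μ) :
    ENNReal.ofReal (1 - α) ≤
      μ {ω | (E (Fin.last n) ω : EReal) ≤
        kthSmallest (Multiset.map (fun i : Fin n => E i.castSucc ω) Finset.univ.val)
          ⌈(1 - α) * ((n : ℝ) + 1)⌉₊} :=
  stmt_5_general μ n α hα E hmeas hexch
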